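/- arXiv:math/0208171 — 2 statements merged into one kernel-verified Lean document; each statement's English description precedes it below -/
import Mathlib

section
/- Let V be a real vector space of dimension m ≥ 2 and S : V × V → V a symmetric bilinear map such that S(v,v) ∧ v = 0 for all v ∈ V (i.e. S(v,v) is proportional to v for every v). Then S(v,w) = (1/(m+1))((tr S)(v)·w + (tr S)(w)·v) for all v, w ∈ V, where (tr S)(v) := trace of the linear map u ↦ S(v,u). In particular S(v,w) = α(v)w + α(w)v for the linear form α = (1/(m+1)) tr S. -/
open LinearMap

lemma trace_smulRight_aux {V : Type*} [AddCommGroup V] [Module ℝ V] [FiniteDimensional ℝ V]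
    (f : V →ₗ[ℝ] ℝ) (v : V) : LinearMap.trace ℝ V (f.smulRight v) = f v := by
  have h : f.smulRight v = dualTensorHom ℝ V V (f ⊗ₜ v) := by ext u; simp
  rw [h, LinearMap.trace_eq_contract_apply]; simp

/-- If `V` is a real vector space of dimension `m ≥ 2` and `S : V × V → V` is a
symmetric bilinear map such that `S(v,v)` is proportional to `v` for every `v`
(i.e. `S(v,v) ∧ v = 0`), then
`S(v,w) = (1/(m+1)) ((tr S)(v)•w + (tr S)(w)•v)` where `(tr S)(v) = trace (u ↦ S(v,u))`;
in particular `S(v,w) = α(v)•w + α(w)•v` for the linear form `α = (1/(m+1)) tr S`. -/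
theorem symm_bilinear_proportional_eq_trace_form {V : Type*} [AddCommGroup V] [Module ℝ V]
    [FiniteDimensional ℝ V] {m : ℕ} (hm : 2 ≤ m) (hdim : Module.finrank ℝ V = m)
    (S : V →ₗ[ℝ] V →ₗ[ℝ] V) (hsymm : ∀ v w : V, S v w = S w v)
    (hprop : ∀ v : V, ∃ c : ℝ, S v v = c • v) :
    (∀ v w : V, S v w = (1 / (m + 1) : ℝ) •
      ((LinearMap.trace ℝ V (S v)) • w + (LinearMap.trace ℝ V (S w)) • v)) ∧
    ∃ α : V →ₗ[ℝ] ℝ, (∀ v, α v = (1 / (m + 1) : ℝ) * LinearMap.trace ℝ V (S v)) ∧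
      ∀ v w : V, S v w = α v • w + α w • v := by
  classical
  set c : V → ℝ := fun v => if h : v = 0 then 0 else (hprop v).choose with hcdef
  have hc0 : c 0 = 0 := by simp [hcdef]
  have hc : ∀ v, S v v = c v • v := by
    intro v
    by_cases h : v = 0
    · simp [h, hc0]
    · simp only [hcdef, dif_neg h]
      exact (hprop v).choose_spec
  have huniq : ∀ (v : V), v ≠ 0 → ∀ a b : ℝ, a • v = b • v → a = b := by
    intro v hv a b hab
    exact smul_left_injective ℝ hv hab
  have hsmul : ∀ (t : ℝ) (v : V), c (t • v) = t * c v := by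
    intro t v
    by_cases hv : v = 0
    · simp [hv, hc0]
    by_cases ht : t = 0
    · simp [ht, hc0]
    have h1 : S (t • v) (t • v) = (t * (t * c v)) • v := by
      simp [map_smul, hc v, smul_smul]
    have h2 : S (t • v) (t • v) = (c (t • v) * t) • v := by
      rw [hc (t • v), smul_smul]
    have h3 := huniq v hv _ _ (h1.symm.trans h2)
    have h4 : (t * c v) * t = c (t • v) * t := by linear_combination h3
    exact (mul_right_cancel₀ ht h4).symm
  -- key identity for independent pairs
  have key2 : ∀ v w : V, LinearIndependent ℝ ![v, w] →
      (2 : ℝ) • S v w = (c (v + w) - c v) • v + (c (v + w) - c w) • w := by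
    intro v w _
    have hexp : S (v + w) (v + w) = c v • v + (2 : ℝ) • S v w + c w • w := by
      simp only [map_add, LinearMap.add_apply, hc v, hc w]
      rw [hsymm w v]
      module
    rw [hc (v + w), smul_add] at hexp
    linear_combination (norm := module) hexp.symm
  have hadd : ∀ v w : V, c (v + w) = c v + c w := by
    intro v w
    by_cases hv : v = 0
    · simp [hv, hc0]
    by_cases hli : LinearIndependent ℝ ![v, w]
    · have hli' : LinearIndependent ℝ ![v, -w] := by
        rw [LinearIndependent.pair_iff] at hli ⊢
        intro s t hst
        have := hli s (-t) (by linear_combination (norm := module) hst)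
        exact ⟨this.1, by linarith [this.2]⟩
      have e1 := key2 v w hli
      have e2 := key2 v (-w) hli'
      have hcw : c (-w) = -c w := by
        have := hsmul (-1) w; simpa using this
      have e2' : -((2:ℝ) • S v w) = (c (v + -w) - c v) • v + (c (v + -w) - c (-w)) • -w := by
        rw [← e2, map_neg, smul_neg]
      rw [hcw] at e2'
      have hsum : ((c (v+w) + c (v + -w) - 2 * c v)) • v +
          ((c (v+w) - c w) - (c (v + -w) + c w)) • w = 0 := by
        linear_combination (norm := module) -e1 - e2'
      rw [LinearIndependent.pair_iff] at hli
      have := hli _ _ hsum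
      linarith [this.1, this.2]
    · rw [LinearIndependent.pair_iff' hv] at hli
      push_neg at hli
      obtain ⟨a, ha⟩ := hli
      have : v + w = (1 + a) • v := by rw [← ha]; module
      rw [this, hsmul, ← ha, hsmul]
      ring
  -- c is linear
  have key : ∀ v w : V, S v w = (c v / 2) • w + (c w / 2) • v := by
    intro v w
    by_cases hv : v = 0
    · simp [hv, hc0]
    by_cases hli : LinearIndependent ℝ ![v, w]
    · have e1 := key2 v w hli
      rw [hadd v w] at e1
      have h2 : (2:ℝ) • ((c v / 2) • w + (c w / 2) • v) = (c v + c w - c v) • v + (c v + c w - c w) • w := by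
        match_scalars <;> ring
      have := e1.trans h2.symm
      exact smul_right_injective V (two_ne_zero) this
    · rw [LinearIndependent.pair_iff' hv] at hli
      push_neg at hli
      obtain ⟨a, ha⟩ := hli
      rw [← ha, map_smul, hc v, hsmul]
      match_scalars <;> ring
  -- the linear functional c/2
  let φ : V →ₗ[ℝ] ℝ :=
    { toFun := fun v => c v / 2
      map_add' := fun v w => by change c (v + w) / 2 = c v / 2 + c w / 2; rw [hadd]; ring
      map_smul' := fun t v => by
        change c (t • v) / 2 = t • (c v / 2); rw [hsmul, smul_eq_mul]; ring }
  have hφ : ∀ v, φ v = c v / 2 := fun _ => rfl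
  have hSv : ∀ v : V, S v = (c v / 2) • LinearMap.id + φ.smulRight v := by
    intro v
    ext u
    simp only [LinearMap.add_apply, LinearMap.smul_apply, LinearMap.id_apply,
      LinearMap.smulRight_apply, key v u, hφ]
  have htr : ∀ v : V, LinearMap.trace ℝ V (S v) = (m + 1 : ℝ) * (c v / 2) := by
    intro v
    rw [hSv v, map_add, map_smul, LinearMap.trace_id, trace_smulRight_aux, hφ, hdim]
    simp only [smul_eq_mul]; ring
  have hm1 : (m : ℝ) + 1 ≠ 0 := by positivity
  have main : ∀ v w : V, S v w = (1 / (m + 1) : ℝ) •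
      ((LinearMap.trace ℝ V (S v)) • w + (LinearMap.trace ℝ V (S w)) • v) := by
    intro v w
    rw [htr v, htr w, key v w]
    match_scalars <;> field_simp <;> ring
  refine ⟨main, (1 / (m + 1) : ℝ) • ((LinearMap.trace ℝ V) ∘ₗ S), fun v => rfl, ?_⟩
  intro v w
  rw [main v w]
  simp only [LinearMap.smul_apply, LinearMap.coe_comp, Function.comp_apply, smul_eq_mul]
  match_scalars <;> ring
end

section
/- Solution of the coefficient recursion u^{(k+1)}_l = u^{(k)}_l + (2k−l+1+(m+1)b) u^{(k)}_{l−1} with u^{(0)}_0 = 1, u^{(k)}_l = 0 for l < 0 or l > k: the unique solution is u^{(k)}_l = C(k,l) · (k−1+(m+1)b)(k−2+(m+1)b)⋯(k−l+(m+1)b), where C(k,l) is the binomial coefficient and the product has l factors (empty product = 1 for l = 0). -/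
/-!
The candidate `C(k,l) · D_l(k - 1 + c)`, with `c = (m+1) b` and `D_l` the falling factorial
`x (x-1) ⋯ (x-l+1)`, satisfies the recursion: peeling the top factor `k + c` off `D_{l+1}(k + c)`
and using Pascal's rule reduces it to the identity `C(k,l+1) (l+1) = C(k,l) (k-l)`. Since the
recursion together with the boundary values determines `u` by induction on `k`, `u` is this candidate.
-/

open Polynomial

theorem Nat.cast_choose_succ_mul_succ {R : Type*} [CommRing R] (n k : ℕ) :
    (n.choose (k + 1) : R) * (k + 1) = n.choose k * (n - k) := by
  rcases le_or_gt k n with hkn | hnk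
  · have h := congrArg (Nat.cast : ℕ → R) (Nat.choose_succ_right_eq n k)
    push_cast [Nat.cast_sub hkn] at h
    exact h
  · simp [Nat.choose_eq_zero_of_lt hnk, Nat.choose_eq_zero_of_lt (hnk.trans (Nat.lt_succ_self k))]

theorem descPochhammer_succ_eval_left {R : Type*} [CommRing R] (n : ℕ) (x : R) :
    (descPochhammer R (n + 1)).eval x = x * (descPochhammer R n).eval (x - 1) := by
  simp [descPochhammer_succ_left]

section ChoosePochhammer

variable {R : Type*} [CommRing R]

noncomputable def choosePochhammer (c : R) (k l : ℕ) : R :=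
  k.choose l * (descPochhammer R l).eval ((k : R) - 1 + c)

variable (c : R)

@[simp]
theorem choosePochhammer_zero_right (k : ℕ) : choosePochhammer c k 0 = 1 := by
  simp [choosePochhammer]

theorem choosePochhammer_zero_succ (l : ℕ) : choosePochhammer c 0 (l + 1) = 0 := by
  simp [choosePochhammer]

theorem choosePochhammer_succ_succ (k l : ℕ) :
    choosePochhammer c (k + 1) (l + 1) =
      choosePochhammer c k (l + 1) + (2 * k - l + c) * choosePochhammer c k l := by
  have hpascal : ((k + 1).choose (l + 1) : R) = k.choose l + k.choose (l + 1) := by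
    rw [Nat.choose_succ_succ, Nat.cast_add]
  have htop : (descPochhammer R (l + 1)).eval ((k : R) + c) =
      ((k : R) + c) * (descPochhammer R l).eval ((k : R) - 1 + c) := by
    rw [descPochhammer_succ_eval_left]; ring_nf
  simp only [choosePochhammer, Nat.cast_succ, add_sub_cancel_right, htop, hpascal,
    descPochhammer_succ_eval]
  linear_combination (descPochhammer R l).eval ((k : R) - 1 + c) *
    Nat.cast_choose_succ_mul_succ (R := R) k l

theorem eq_choosePochhammer_of_recursion (u : ℕ → ℤ → R) (h0 : u 0 0 = 1)
    (hbd : ∀ (k : ℕ) (l : ℤ), (l < 0 ∨ (k : ℤ) < l) → u k l = 0)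
    (hrec : ∀ (k : ℕ) (l : ℤ), u (k + 1) l = u k l + (2 * (k : R) - (l : R) + 1 + c) * u k (l - 1))
    (k l : ℕ) : u k l = choosePochhammer c k l := by
  induction k generalizing l with
  | zero =>
    cases l with
    | zero => simpa using h0
    | succ l =>
      rw [choosePochhammer_zero_succ]
      exact hbd 0 (l + 1) (Or.inr (by omega))
  | succ k ih =>
    cases l with
    | zero =>
      have hneg : u k (0 - 1) = 0 := hbd k (0 - 1) (Or.inl (by norm_num))
      have hk0 := ih 0
      rw [Nat.cast_zero] at hk0 ⊢
      rw [hrec, hneg, mul_zero, add_zero, hk0, choosePochhammer_zero_right,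
        choosePochhammer_zero_right]
    | succ l =>
      have hpred : ((l + 1 : ℕ) : ℤ) - 1 = l := by omega
      rw [hrec, hpred, ih, ih, choosePochhammer_succ_succ]
      push_cast
      ring

end ChoosePochhammer

theorem coefficient_recursion_solution_general (b : ℝ) (m : ℕ)
    (u : ℕ → ℤ → ℝ)
    (h0 : u 0 0 = 1)
    (hbd : ∀ (k : ℕ) (l : ℤ), (l < 0 ∨ (k : ℤ) < l) → u k l = 0)
    (hrec : ∀ (k : ℕ) (l : ℤ),
      u (k + 1) l = u k l + (2 * (k : ℝ) - (l : ℝ) + 1 + ((m : ℝ) + 1) * b) * u k (l - 1)) :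
    ∀ (k l : ℕ), l ≤ k →
      u k l = (k.choose l : ℝ) *
        ∏ j ∈ Finset.range l, ((k : ℝ) - ((j : ℝ) + 1) + ((m : ℝ) + 1) * b) := by
  intro k l _
  rw [eq_choosePochhammer_of_recursion _ u h0 hbd hrec, choosePochhammer,
    descPochhammer_eval_eq_prod_range]
  congr 1
  exact Finset.prod_congr rfl fun j _ => by ring

/-- Solution of the coefficient recursion
`u^{(k+1)}_l = u^{(k)}_l + (2k−l+1+(m+1)b) u^{(k)}_{l−1}` with `u^{(0)}_0 = 1` and
`u^{(k)}_l = 0` for `l < 0` or `l > k`: the unique solution is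
`u^{(k)}_l = C(k,l) (k−1+(m+1)b)(k−2+(m+1)b)⋯(k−l+(m+1)b)` (a product of `l` factors). -/
theorem coefficient_recursion_solution (b : ℝ) (m : ℕ) (hm : 0 < m)
    (u : ℕ → ℤ → ℝ)
    (h0 : u 0 0 = 1)
    (hbd : ∀ (k : ℕ) (l : ℤ), (l < 0 ∨ (k : ℤ) < l) → u k l = 0)
    (hrec : ∀ (k : ℕ) (l : ℤ),
      u (k + 1) l = u k l + (2 * (k : ℝ) - (l : ℝ) + 1 + ((m : ℝ) + 1) * b) * u k (l - 1)) :
    ∀ (k l : ℕ), l ≤ k →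
      u k l = (k.choose l : ℝ) *
        ∏ j ∈ Finset.range l, ((k : ℝ) - ((j : ℝ) + 1) + ((m : ℝ) + 1) * b) :=
  coefficient_recursion_solution_general b m u h0 hbd hrec
end
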